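/- There exists exactly one b* ∈ (0,∞) with F′(b*) = 0; this b* lies in the interval (0, 6/5], and F attains its absolute minimum over (0,∞) at b*, i.e. F(b*) ≤ F(t) for all t > 0. -/

import Mathlib

/-- The restriction of `A2` to the diagonal. -/
noncomputable def F (b : ℝ) : ℝ :=
  (9 + 96*b + 396*b^2 + 840*b^3 + 954*b^4 + 528*b^5 + 96*b^6) /
  (1 + 12*b + 54*b^2 + 120*b^3 + 138*b^4 + 72*b^5 + 12*b^6)

/-- `A`: the high-degree part of the derivative numerator. -/
noncomputable def Ap (t : ℝ) : ℝ := 624*t^7 + 708*t^8 + 300*t^9 + 48*t^10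

/-- `B`: the low-degree part of the derivative numerator. -/
noncomputable def Bp (t : ℝ) : ℝ := 1 + 15*t + 96*t^2 + 336*t^3 + 680*t^4 + 720*t^5 + 120*t^6

noncomputable def Dp (t : ℝ) : ℝ := 1 + 12*t + 54*t^2 + 120*t^3 + 138*t^4 + 72*t^5 + 12*t^6

lemma Bp_pos {t : ℝ} (ht : 0 < t) : 0 < Bp t := by
  unfold Bp; positivity

lemma Dp_pos {t : ℝ} (ht : 0 < t) : 0 < Dp t := by
  unfold Dp; positivity

set_option maxHeartbeats 2000000 in
/-- the key cross inequality: `Ap/Bp` is strictly increasing on the positives. -/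
lemma cross {x y : ℝ} (hx : 0 < x) (hxy : x < y) : Ap x * Bp y < Ap y * Bp x := by
  obtain ⟨e, he, rfl⟩ : ∃ e : ℝ, 0 < e ∧ y = x + e := ⟨y - x, by linarith, by ring⟩
  have key : Ap (x + e) * Bp x - Ap x * Bp (x + e) =
      624*e ^ 7 + 708*e ^ 8 + 300*e ^ 9 + 48*e ^ 10 + 4368*x ^ 1*e ^ 6 + 15024*x ^ 1*e ^ 7 + 13320*x ^ 1*e ^ 8 + 4980*x ^ 1*e ^ 9 + 720*x ^ 1*e ^ 10 + 13104*x ^ 2*e ^ 5 + 85344*x ^ 2*e ^ 6 + 155664*x ^ 2*e ^ 7 + 110628*x ^ 2*e ^ 8 + 36000*x ^ 2*e ^ 9 + 4608*x ^ 2*e ^ 10 + 21840*x ^ 3*e ^ 4 + 236208*x ^ 3*e ^ 5 + 741888*x ^ 3*e ^ 6 + 921168*x ^ 3*e ^ 7 + 529488*x ^ 3*e ^ 8 + 146880*x ^ 3*e ^ 9 + 16128*x ^ 3*e ^ 10 + 21840*x ^ 4*e ^ 3 + 377160*x ^ 4*e ^ 4 + 1890504*x ^ 4*e ^ 5 + 3758832*x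 ^ 4*e ^ 6 + 3450624*x ^ 4*e ^ 7 + 1596000*x ^ 4*e ^ 8 + 365280*x ^ 4*e ^ 9 + 32640*x ^ 4*e ^ 10 + 13104*x ^ 5*e ^ 2 + 367248*x ^ 5*e ^ 3 + 2877840*x ^ 5*e ^ 4 + 8788248*x ^ 5*e ^ 5 + 12201504*x ^ 5*e ^ 6 + 8482560*x ^ 5*e ^ 7 + 3071520*x ^ 5*e ^ 8 + 542400*x ^ 5*e ^ 9 + 34560*x ^ 5*e ^ 10 + 4368*x ^ 6*e ^ 1 + 216384*x ^ 6*e ^ 2 + 2716560*x ^ 6*e ^ 3 + 12673080*x ^ 6*e ^ 4 + 26042688*x ^ 6*e ^ 5 + 26060160*x ^ 6*e ^ 6 + 13432320*x ^ 6*e ^ 7 + 3497760*x ^ 6*e ^ 8 + 381600*x ^ 6*e ^ 9 + 5760*x ^ 6*e ^ 10 + 61824*x ^ 7*e ^ 1 + 1506240*x ^ 7*e ^ 2 + 11318544*x ^ 7*e ^ 3 + 34859040*x ^ 7*e ^ 4 + 49808256*x ^ 7*e ^ 5 + 35245440*x ^ 7*e ^ 6 + 12372480*x ^ 7*e ^ 7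 + 1879200*x ^ 7*e ^ 8 + 57600*x ^ 7*e ^ 9 + 376560*x ^ 8*e ^ 1 + 5773248*x ^ 8*e ^ 2 + 28743360*x ^ 8*e ^ 3 + 60366240*x ^ 8*e ^ 4 + 58928256*x ^ 8*e ^ 5 + 27292320*x ^ 8*e ^ 6 + 5443200*x ^ 8*e ^ 7 + 259200*x ^ 8*e ^ 8 + 1282944*x ^ 9*e ^ 1 + 13352400*x ^ 9*e ^ 2 + 45186240*x ^ 9*e ^ 3 + 63518880*x ^ 9*e ^ 4 + 39473280*x ^ 9*e ^ 5 + 10245600*x ^ 9*e ^ 6 + 691200*x ^ 9*e ^ 7 + 2670480*x ^ 10*e ^ 1 + 19062912*x ^ 10*e ^ 2 + 42811392*x ^ 10*e ^ 3 + 37630560*x ^ 10*e ^ 4 + 12994560*x ^ 10*e ^ 5 + 1203840*x ^ 10*e ^ 6 + 3465984*x ^ 11*e ^ 1 + 16422336*x ^ 11*e ^ 2 + 22828800*x ^ 11*e ^ 3 + 11080800*x ^ 11*e ^ 4 + 1416960*x ^ 11*e ^ 5 + 2737056*x ^ 12*e ^ 1 + 7993440*x ^ 12*e ^ 2 + 6105600*x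 ^ 12*e ^ 3 + 1123200*x ^ 12*e ^ 4 + 1229760*x ^ 13*e ^ 1 + 1965600*x ^ 13*e ^ 2 + 576000*x ^ 13*e ^ 3 + 280800*x ^ 14*e ^ 1 + 172800*x ^ 14*e ^ 2 + 23040*x ^ 15*e ^ 1 := by
    unfold Ap Bp; ring
  linarith [key, (by positivity : (0:ℝ) < 624*e ^ 7 + 708*e ^ 8 + 300*e ^ 9 + 48*e ^ 10 + 4368*x ^ 1*e ^ 6 + 15024*x ^ 1*e ^ 7 + 13320*x ^ 1*e ^ 8 + 4980*x ^ 1*e ^ 9 + 720*x ^ 1*e ^ 10 + 13104*x ^ 2*e ^ 5 + 85344*x ^ 2*e ^ 6 + 155664*x ^ 2*e ^ 7 + 110628*x ^ 2*e ^ 8 + 36000*x ^ 2*e ^ 9 + 4608*x ^ 2*e ^ 10 + 21840*x ^ 3*e ^ 4 + 236208*x ^ 3*e ^ 5 + 741888*x ^ 3*e ^ 6 + 921168*x ^ 3*e ^ 7 + 529488*x ^ 3*e ^ 8 + 146880*x ^ 3*e ^ 9 + 16128*x ^ 3*e ^ 10 + 21840*x ^ 4*e ^ 3 + 377160*x ^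 4*e ^ 4 + 1890504*x ^ 4*e ^ 5 + 3758832*x ^ 4*e ^ 6 + 3450624*x ^ 4*e ^ 7 + 1596000*x ^ 4*e ^ 8 + 365280*x ^ 4*e ^ 9 + 32640*x ^ 4*e ^ 10 + 13104*x ^ 5*e ^ 2 + 367248*x ^ 5*e ^ 3 + 2877840*x ^ 5*e ^ 4 + 8788248*x ^ 5*e ^ 5 + 12201504*x ^ 5*e ^ 6 + 8482560*x ^ 5*e ^ 7 + 3071520*x ^ 5*e ^ 8 + 542400*x ^ 5*e ^ 9 + 34560*x ^ 5*e ^ 10 + 4368*x ^ 6*e ^ 1 + 216384*x ^ 6*e ^ 2 + 2716560*x ^ 6*e ^ 3 + 12673080*x ^ 6*e ^ 4 + 26042688*x ^ 6*e ^ 5 + 26060160*x ^ 6*e ^ 6 + 13432320*x ^ 6*e ^ 7 + 3497760*x ^ 6*e ^ 8 + 381600*x ^ 6*e ^ 9 + 5760*x ^ 6*e ^ 10 + 61824*x ^ 7*e ^ 1 + 1506240*x ^ 7*e ^ 2 + 11318544*x ^ 7*e ^ 3 + 34859040*x ^ 7*e ^ 4 + 49808256*x ^ 7*e ^ 5 +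 35245440*x ^ 7*e ^ 6 + 12372480*x ^ 7*e ^ 7 + 1879200*x ^ 7*e ^ 8 + 57600*x ^ 7*e ^ 9 + 376560*x ^ 8*e ^ 1 + 5773248*x ^ 8*e ^ 2 + 28743360*x ^ 8*e ^ 3 + 60366240*x ^ 8*e ^ 4 + 58928256*x ^ 8*e ^ 5 + 27292320*x ^ 8*e ^ 6 + 5443200*x ^ 8*e ^ 7 + 259200*x ^ 8*e ^ 8 + 1282944*x ^ 9*e ^ 1 + 13352400*x ^ 9*e ^ 2 + 45186240*x ^ 9*e ^ 3 + 63518880*x ^ 9*e ^ 4 + 39473280*x ^ 9*e ^ 5 + 10245600*x ^ 9*e ^ 6 + 691200*x ^ 9*e ^ 7 + 2670480*x ^ 10*e ^ 1 + 19062912*x ^ 10*e ^ 2 + 42811392*x ^ 10*e ^ 3 + 37630560*x ^ 10*e ^ 4 + 12994560*x ^ 10*e ^ 5 + 1203840*x ^ 10*e ^ 6 + 3465984*x ^ 11*e ^ 1 + 16422336*x ^ 11*e ^ 2 + 22828800*x ^ 11*e ^ 3 + 11080800*x ^ 11*e ^ 4 + 1416960*x ^ 11*e ^ 5 + 2737056*x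 ^ 12*e ^ 1 + 7993440*x ^ 12*e ^ 2 + 6105600*x ^ 12*e ^ 3 + 1123200*x ^ 12*e ^ 4 + 1229760*x ^ 13*e ^ 1 + 1965600*x ^ 13*e ^ 2 + 576000*x ^ 13*e ^ 3 + 280800*x ^ 14*e ^ 1 + 172800*x ^ 14*e ^ 2 + 23040*x ^ 15*e ^ 1)]

lemma deriv_F {t : ℝ} (ht : 0 < t) :
    deriv F t = 12 * (Ap t - Bp t) / (Dp t)^2 := by
  have hD : Dp t ≠ 0 := ne_of_gt (Dp_pos ht)
  have hid : HasDerivAt (fun b : ℝ => b) 1 t := hasDerivAt_id t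
  have hN : HasDerivAt (fun b : ℝ => 9 + 96*b + 396*b^2 + 840*b^3 + 954*b^4 + 528*b^5 + 96*b^6)
      (96 + 792*t + 2520*t^2 + 3816*t^3 + 2640*t^4 + 576*t^5) t := by
    have h := (((((((hasDerivAt_const t (9:ℝ)).add (hid.const_mul 96)).add
      ((hid.pow 2).const_mul 396)).add ((hid.pow 3).const_mul 840)).add
      ((hid.pow 4).const_mul 954)).add ((hid.pow 5).const_mul 528)).add
      ((hid.pow 6).const_mul 96))
    exact h.congr_deriv (by push_cast; ring)
  have hDd : HasDerivAt (fun b : ℝ => 1 + 12*b + 54*b^2 + 120*b^3 + 138*b^4 + 72*b^5 + 12*b^6)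
      (12 + 108*t + 360*t^2 + 552*t^3 + 360*t^4 + 72*t^5) t := by
    have h := (((((((hasDerivAt_const t (1:ℝ)).add (hid.const_mul 12)).add
      ((hid.pow 2).const_mul 54)).add ((hid.pow 3).const_mul 120)).add
      ((hid.pow 4).const_mul 138)).add ((hid.pow 5).const_mul 72)).add
      ((hid.pow 6).const_mul 12))
    exact h.congr_deriv (by push_cast; ring)
  have hF : HasDerivAt F
      (((96 + 792*t + 2520*t^2 + 3816*t^3 + 2640*t^4 + 576*t^5) *
        (1 + 12*t + 54*t^2 + 120*t^3 + 138*t^4 + 72*t^5 + 12*t^6) -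
        (9 + 96*t + 396*t^2 + 840*t^3 + 954*t^4 + 528*t^5 + 96*t^6) *
        (12 + 108*t + 360*t^2 + 552*t^3 + 360*t^4 + 72*t^5)) /
        (1 + 12*t + 54*t^2 + 120*t^3 + 138*t^4 + 72*t^5 + 12*t^6)^2) t := by
    exact hN.div hDd (by simpa [Dp] using hD)
  rw [hF.deriv]
  have hD2 : (Dp t)^2 ≠ 0 := pow_ne_zero 2 hD
  unfold Dp at hD2 ⊢
  field_simp
  unfold Ap Bp
  ring

lemma contF {s : Set ℝ} (hs : ∀ x ∈ s, 0 < x) : ContinuousOn F s := by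
  apply ContinuousOn.div
  · fun_prop
  · fun_prop
  · intro x hx
    have := hs x hx
    positivity

/-- There is exactly one positive critical point `b*` of `F`; it lies in
`(0, 6/5]`, and `F` attains its absolute minimum over `(0, ∞)` there. -/
theorem F_unique_critical_point :
    ∃ b : ℝ, 0 < b ∧ b ≤ 6/5 ∧ deriv F b = 0 ∧
      (∀ t : ℝ, 0 < t → F b ≤ F t) ∧
      (∀ t : ℝ, 0 < t → deriv F t = 0 → t = b) := by
  -- existence of a root of Ap - Bp in [1, 6/5]
  have hcont : ContinuousOn (fun t : ℝ => Ap t - Bp t) (Set.Icc 1 (6/5)) := by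
    unfold Ap Bp; fun_prop
  have h1 : Ap (1:ℝ) - Bp 1 = -288 := by unfold Ap Bp; norm_num
  have h2 : Ap ((6:ℝ)/5) - Bp (6/5) = 27612384773/9765625 := by unfold Ap Bp; norm_num
  have hmem : (0:ℝ) ∈ Set.Icc (Ap (1:ℝ) - Bp 1) (Ap ((6:ℝ)/5) - Bp (6/5)) := by
    rw [h1, h2]; constructor <;> norm_num
  obtain ⟨b, hb, hb0⟩ := intermediate_value_Icc (by norm_num : (1:ℝ) ≤ 6/5) hcont hmem
  simp only [] at hb0
  have hbpos : (0:ℝ) < b := lt_of_lt_of_le one_pos hb.1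
  have hbeq : Ap b = Bp b := by have := hb0; simp only [sub_eq_zero] at this; exact this
  have hBb : 0 < Bp b := Bp_pos hbpos
  -- sign of Ap t - Bp t
  have hsign_lt : ∀ t : ℝ, 0 < t → t < b → Ap t - Bp t < 0 := by
    intro t ht htb
    have h := cross ht htb
    rw [hbeq] at h
    have := (mul_lt_mul_iff_of_pos_right hBb).mp (by linarith [mul_comm (Bp b) (Bp t)] : Ap t * Bp b < Bp t * Bp b)
    linarith
  have hsign_gt : ∀ t : ℝ, b < t → 0 < Ap t - Bp t := by
    intro t htb
    have h := cross hbpos htb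
    rw [hbeq] at h
    have hBt : 0 < Bp t := Bp_pos (lt_trans hbpos htb)
    have := (mul_lt_mul_iff_of_pos_right hBb).mp (by nlinarith : Bp t * Bp b < Ap t * Bp b)
    linarith
  have hderiv_neg : ∀ t : ℝ, 0 < t → t < b → deriv F t < 0 := by
    intro t ht htb
    rw [deriv_F ht]
    have h := hsign_lt t ht htb
    have hD := Dp_pos ht
    apply div_neg_of_neg_of_pos (by linarith) (by positivity)
  have hderiv_pos : ∀ t : ℝ, b < t → 0 < deriv F t := by
    intro t htb
    have ht : 0 < t := lt_trans hbpos htb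
    rw [deriv_F ht]
    have h := hsign_gt t htb
    have hD := Dp_pos ht
    positivity
  refine ⟨b, hbpos, hb.2, ?_, ?_, ?_⟩
  · rw [deriv_F hbpos, hbeq]; simp
  · intro t ht
    rcases lt_trichotomy t b with h | h | h
    · -- F strictly decreasing on [t, b]
      have hanti : StrictAntiOn F (Set.Icc t b) := by
        apply strictAntiOn_of_deriv_neg (convex_Icc t b)
        · exact contF (fun x hx => lt_of_lt_of_le ht hx.1)
        · intro x hx
          rw [interior_Icc] at hx
          exact hderiv_neg x (lt_trans ht hx.1) hx.2
      exact le_of_lt (hanti (Set.left_mem_Icc.mpr h.le) (Set.right_mem_Icc.mpr h.le) h)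
    · rw [h]
    · have hmono : StrictMonoOn F (Set.Icc b t) := by
        apply strictMonoOn_of_deriv_pos (convex_Icc b t)
        · exact contF (fun x hx => lt_of_lt_of_le hbpos hx.1)
        · intro x hx
          rw [interior_Icc] at hx
          exact hderiv_pos x hx.1
      exact le_of_lt (hmono (Set.left_mem_Icc.mpr h.le) (Set.right_mem_Icc.mpr h.le) h)
  · intro t ht hdt
    rcases lt_trichotomy t b with h | h | h
    · exact absurd hdt (ne_of_lt (hderiv_neg t ht h))
    · exact h
    · exact absurd hdt (ne_of_gt (hderiv_pos t h))
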